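/- Single-valuedness identity for the coefficients A_{nm}: for every n ≥ 1, Σ_{m=0}^{n} (−1)^m A_{nm} = 1/A_{n0} (note A_{n0} = −2^{−n}(2n−1)!!/n!). For example, for n = 1: A_{10} − A_{11} = −1/2 − 3/2 = −2 = 1/A_{10}. -/

import Mathlib

open scoped Nat BigOperators

/-- The completed Riemann zeta function `2ξ(s) = s(s-1)π^{-s/2}Γ(s/2)ζ(s)`,
extended by its (entire) values `1` at `s = 0, 1`. -/
noncomputable def xi2 (s : ℂ) : ℂ :=
  if s = 0 ∨ s = 1 then 1
  else s * (s - 1) * (Real.pi : ℂ) ^ (-s / 2) * Complex.Gamma (s / 2) * riemannZeta s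

/-- The coefficients `A_{nm} = 2^{m-n} (2(n+m)-1)!! / ((2m-1)(n-m)!(2m)!)`. -/
noncomputable def A (n m : ℕ) : ℝ :=
  (2 : ℝ) ^ ((m : ℤ) - (n : ℤ)) * (Nat.doubleFactorial (2 * (n + m) - 1) : ℝ) /
    ((2 * (m : ℝ) - 1) * (Nat.factorial (n - m) : ℝ) * (Nat.factorial (2 * m) : ℝ))

/-- `Φ_m = log 2ξ(2m)`, a real number (the value `2ξ(2m)` is a positive real). -/
noncomputable def PhiVal (m : ℕ) : ℝ := (Complex.log (xi2 (2 * m))).re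

/-- The closed-form variant `Λ_n` of the Keiper sequence. -/
noncomputable def Lambda (n : ℕ) : ℝ := ∑ m ∈ Finset.Icc 1 n, (-1 : ℝ) ^ m * A n m * PhiVal m


/-!
Since `(2k-1)‼ = (2k)! / (2^k k!)`, the summands are `(-1)^m A_{nm} = F(n,m) / 4^n` with the
hypergeometric term `F(n,m) = (-1)^m (2n+2m)! / ((n+m)! (n-m)! (2m)! (2m-1))`.
Zeilberger's algorithm yields a certificate `G` with
`(2n+1) F(n+1,m) - 8(n+1) F(n,m) = G(n,m+1) - G(n,m)`, so telescoping over `m` gives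
`(2n+1) S_{n+1} = 8(n+1) S_n` for `S_n = ∑_m F(n,m)`. Together with
`(n+1) F(n+1,0) = 2(2n+1) F(n,0)` this shows `S_n F(n,0) = 16^n`, which is the identity
after dividing by `16^n = 4^n · 4^n`.
-/

theorem Nat.doubleFactorial_two_mul_sub_one_mul (k : ℕ) :
    (2 * k - 1)‼ * (2 ^ k * k !) = (2 * k)! := by
  cases k with
  | zero => rfl
  | succ j =>
    rw [← Nat.doubleFactorial_two_mul, show 2 * (j + 1) - 1 = 2 * j + 1 by omega,
      show 2 * (j + 1) = 2 * j + 1 + 1 by omega, Nat.factorial_eq_mul_doubleFactorial, mul_comm]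

noncomputable def wzTerm (n m : ℕ) : ℝ :=
  (-1) ^ m * (2 * n + 2 * m)! / ((n + m)! * (n - m)! * (2 * m)! * (2 * m - 1 : ℝ))

/-- The WZ certificate of `wzTerm`, `G(n,m) = R(n,m) F(n,m)` with the rational function
`R(n,m) = -2 (4n+3) m (2m-1)^2 / ((2n+1) (n+1) (n+1-m))`. -/
noncomputable def wzCert (n m : ℕ) : ℝ :=
  -2 * (4 * n + 3) * (-1) ^ m * m * (2 * m - 1) * (2 * n + 2 * m)! /
    ((2 * n + 1) * (n + 1) * (n + m)! * (n + 1 - m)! * (2 * m)!)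

lemma two_mul_natCast_sub_one_ne_zero (m : ℕ) : 2 * (m : ℝ) - 1 ≠ 0 := by
  have : (2 * m : ℝ) ≠ 1 := by exact_mod_cast (Nat.two_mul_ne_two_mul_add_one (n := m) (m := 0))
  exact sub_ne_zero.mpr this

lemma neg_one_pow_mul_A (n m : ℕ) :
    (-1 : ℝ) ^ m * A n m = wzTerm n m / 4 ^ n := by
  have hdf : ((2 * (n + m) - 1)‼ : ℝ) = (2 * (n + m))! / (2 ^ (n + m) * (n + m)!) := by
    rw [eq_div_iff (by positivity)]
    exact_mod_cast Nat.doubleFactorial_two_mul_sub_one_mul (n + m)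
  have hpow : (2 : ℝ) ^ ((m : ℤ) - n) * 4 ^ n = 2 ^ (n + m) := by
    rw [zpow_sub₀ two_ne_zero, zpow_natCast, zpow_natCast, show (4 : ℝ) = 2 ^ 2 by norm_num,
      ← pow_mul]
    field_simp
    ring
  have := two_mul_natCast_sub_one_ne_zero m
  rw [A, wzTerm, hdf, mul_add]
  field_simp
  exact hpow

lemma wzTerm_succ_zero (n : ℕ) :
    (n + 1 : ℝ) * wzTerm (n + 1) 0 = 2 * (2 * n + 1) * wzTerm n 0 := by
  simp only [wzTerm, pow_zero, add_zero, Nat.sub_zero, mul_zero, Nat.factorial_zero,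
    Nat.cast_one, Nat.cast_zero, mul_one]
  rw [show 2 * (n + 1) = 2 * n + 1 + 1 by ring, Nat.factorial_succ, Nat.factorial_succ,
    Nat.factorial_succ]
  push_cast
  field_simp
  ring

lemma wzTerm_recurrence {n m : ℕ} (hm : m ≤ n) :
    (2 * n + 1 : ℝ) * wzTerm (n + 1) m - 8 * (n + 1) * wzTerm n m =
      wzCert n (m + 1) - wzCert n m := by
  rw [wzTerm, wzTerm, wzCert, wzCert,
    show 2 * (n + 1) + 2 * m = 2 * n + 2 * m + 1 + 1 by ring,
    show 2 * n + 2 * (m + 1) = 2 * n + 2 * m + 1 + 1 by ring,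
    show n + 1 + m = n + m + 1 by ring, show n + (m + 1) = n + m + 1 by ring,
    show n + 1 - m = n - m + 1 by omega, show n + 1 - (m + 1) = n - m by omega,
    show 2 * (m + 1) = 2 * m + 1 + 1 by ring]
  simp only [Nat.factorial_succ]
  have hnm : ((n - m : ℕ) : ℝ) = n - m := Nat.cast_sub hm
  have hnm' : (n : ℝ) - m + 1 ≠ 0 := by rw [← hnm]; positivity
  have := two_mul_natCast_sub_one_ne_zero m
  push_cast [hnm]
  field_simp
  ring

lemma wzCert_zero (n : ℕ) : wzCert n 0 = 0 := by
  simp [wzCert]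

lemma wzCert_succ_self (n : ℕ) :
    wzCert n (n + 1) = -((2 * n + 1 : ℝ) * wzTerm (n + 1) (n + 1)) := by
  rw [wzCert, wzTerm, show 2 * n + 2 * (n + 1) = 4 * n + 2 by ring,
    show 2 * (n + 1) + 2 * (n + 1) = 4 * n + 2 + 1 + 1 by ring,
    show n + (n + 1) = 2 * n + 1 by ring, show n + 1 + (n + 1) = 2 * n + 1 + 1 by ring,
    show 2 * (n + 1) = 2 * n + 1 + 1 by ring, Nat.sub_self]
  simp only [Nat.factorial_succ, Nat.factorial_zero]
  have := two_mul_natCast_sub_one_ne_zero (n + 1)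
  push_cast at this ⊢
  field_simp
  ring

lemma sum_wzTerm_succ (n : ℕ) :
    (2 * n + 1 : ℝ) * ∑ m ∈ Finset.range (n + 2), wzTerm (n + 1) m =
      8 * (n + 1) * ∑ m ∈ Finset.range (n + 1), wzTerm n m := by
  have htel := Finset.sum_range_sub (wzCert n) (n + 1)
  rw [← Finset.sum_congr rfl fun m hm ↦ wzTerm_recurrence (Finset.mem_range_succ_iff.mp hm),
    Finset.sum_sub_distrib, ← Finset.mul_sum, ← Finset.mul_sum, wzCert_zero,
    wzCert_succ_self] at htel
  rw [Finset.sum_range_succ _ (n + 1)]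
  linarith

lemma sum_wzTerm_mul_wzTerm_zero (n : ℕ) :
    (∑ m ∈ Finset.range (n + 1), wzTerm n m) * wzTerm n 0 = 16 ^ n := by
  induction n with
  | zero => simp [wzTerm]
  | succ n ih =>
    have h2n : (2 * n + 1 : ℝ) ≠ 0 := by positivity
    have hn : (n + 1 : ℝ) ≠ 0 := by positivity
    have hS := sum_wzTerm_succ n
    have hF := wzTerm_succ_zero n
    refine mul_left_cancel₀ (mul_ne_zero h2n hn) ?_
    rw [pow_succ, ← ih]
    linear_combination ((n + 1) * wzTerm (n + 1) 0) * hS +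
      (8 * (n + 1) * ∑ m ∈ Finset.range (n + 1), wzTerm n m) * hF

theorem sum_alternating_A_eq_inv_A_zero_general (n : ℕ) :
    ∑ m ∈ Finset.range (n + 1), (-1 : ℝ) ^ m * A n m = 1 / A n 0 := by
  have hA0 : A n 0 = wzTerm n 0 / 4 ^ n := by simpa using neg_one_pow_mul_A n 0
  have hsum := sum_wzTerm_mul_wzTerm_zero n
  have hF0 : wzTerm n 0 ≠ 0 := right_ne_zero_of_mul (hsum.trans_ne (by positivity))
  simp_rw [neg_one_pow_mul_A, ← Finset.sum_div, hA0, one_div_div]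
  rw [div_eq_div_iff (by positivity) hF0, hsum, ← mul_pow]
  norm_num

/-- Single-valuedness identity: `∑_{m=0}^n (-1)^m A_{nm} = 1/A_{n0}`. -/
theorem sum_alternating_A_eq_inv_A_zero (n : ℕ) (hn : 1 ≤ n) :
    ∑ m ∈ Finset.range (n + 1), (-1 : ℝ) ^ m * A n m = 1 / A n 0 :=
  sum_alternating_A_eq_inv_A_zero_general n
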